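/- arXiv:1811.01285 — 7 statements merged into one kernel-verified Lean document; each statement's English description precedes it below -/
import Mathlib

section
/- Let A ∈ ℝ^{s×s} with s ≥ 2 be lower triangular with c = A e, let τ^(j) = A c^{j−1} − (1/j) c^j, and suppose a₁₁ = 0. If the second components satisfy τ^(2)_2 = 0 and τ^(3)_2 = 0, then c₂ = a₂₁ + a₂₂ = 0. (This is the key step showing that an irreducible DIRK scheme has stage order at most 2.) -/
/-!
In a lower triangular scheme with `a₁₁ = 0` the first abscissa vanishes, so the second rows of
`τ^(2)` and `τ^(3)` reduce to `a₂₂ c₂ - c₂² / 2` and `a₂₂ c₂² - c₂³ / 3`. Multiplying the first by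
`c₂` and subtracting the second leaves `c₂³ / 6 = 0`.
-/

open Finset Matrix

section LowerTriangular

variable {ι R : Type*} [Fintype ι] [LinearOrder ι] [LocallyFiniteOrderBot ι] [CommSemiring R]

theorem mulVec_apply_eq_sum_Iic_of_lower_triangular {A : Matrix ι ι R}
    (hA : ∀ i j, i < j → A i j = 0) (v : ι → R) (i : ι) :
    (A *ᵥ v) i = ∑ j ∈ Iic i, A i j * v j := by
  rw [mulVec, dotProduct]
  refine (sum_subset (subset_univ _) fun j _ hj => ?_).symm
  rw [hA i j (not_le.mp (by simpa using hj)), zero_mul]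

end LowerTriangular

theorem Fin.Iic_zero_eq_singleton (n : ℕ) : Iic (0 : Fin (n + 2)) = {0} := by
  ext j; simp

theorem Fin.Iic_one_eq_pair (n : ℕ) : Iic (1 : Fin (n + 2)) = {0, 1} := by
  ext j
  simp only [mem_Iic, mem_insert, mem_singleton, Fin.le_def, Fin.ext_iff, Fin.val_zero, Fin.val_one]
  omega

theorem eq_zero_of_stage_order_conditions {a c : ℝ} (h2 : a * c - 2⁻¹ * c ^ 2 = 0)
    (h3 : a * c ^ 2 - 3⁻¹ * c ^ 3 = 0) : c = 0 := by
  have hcube : c ^ 3 = 0 := by linear_combination 6 * h3 - 6 * c * h2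
  exact pow_eq_zero_iff (by norm_num) |>.mp hcube

/-- For a lower triangular `A` (with `s ≥ 2` stages), `c = A e`, and
`a₁₁ = 0`, if the second components of the stage order vectors satisfy
`τ^(2)_2 = 0` and `τ^(3)_2 = 0`, then `c₂ = a₂₁ + a₂₂ = 0`. -/
theorem dirk_stage_order_le_two_key_step
    (n : ℕ) (A : Matrix (Fin (n + 2)) (Fin (n + 2)) ℝ)
    (hA : ∀ i j : Fin (n + 2), i < j → A i j = 0)
    (h11 : A 0 0 = 0)
    (c : Fin (n + 2) → ℝ) (hc : c = A.mulVec (fun _ => 1))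
    (τ : ℕ → Fin (n + 2) → ℝ)
    (hτ : ∀ j : ℕ, 1 ≤ j → τ j = A.mulVec (c ^ (j - 1)) - ((j : ℝ))⁻¹ • c ^ j)
    (h2 : τ 2 1 = 0) (h3 : τ 3 1 = 0) :
    c 1 = 0 ∧ A 1 0 + A 1 1 = 0 := by
  have row_one (v : Fin (n + 2) → ℝ) : (A *ᵥ v) 1 = A 1 0 * v 0 + A 1 1 * v 1 := by
    simp [mulVec_apply_eq_sum_Iic_of_lower_triangular hA, Fin.Iic_one_eq_pair]
  have hc0 : c 0 = 0 := by
    simp [hc, mulVec_apply_eq_sum_Iic_of_lower_triangular hA, Fin.Iic_zero_eq_singleton, h11]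
  have hc1 : c 1 = A 1 0 + A 1 1 := by simp [hc, row_one]
  have hτ2 : A 1 1 * c 1 - 2⁻¹ * c 1 ^ 2 = 0 := by
    simpa [hτ 2 le_add_self, row_one, hc0] using h2
  have hτ3 : A 1 1 * c 1 ^ 2 - 3⁻¹ * c 1 ^ 3 = 0 := by
    simpa [hτ 3 (by norm_num), row_one, hc0] using h3
  have hc1_zero := eq_zero_of_stage_order_conditions hτ2 hτ3
  exact ⟨hc1_zero, hc1 ▸ hc1_zero⟩
end

section
/- Let A ∈ ℝ^{s×s}, b ∈ ℝ^s, c = A e, and τ^(j) = A c^{j−1} − (1/j) c^j. There exists a subspace W ⊆ ℝ^s that is invariant under A, orthogonal to b, and contains τ^(j) for all 1 ≤ j ≤ q̃, if and only if bᵀ A^ℓ τ^(j) = 0 for all 0 ≤ ℓ ≤ s−1 and all 1 ≤ j ≤ q̃. -/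
/-!
The smallest `A`-invariant subspace containing the vectors `τ^(j)` is their Krylov span, the span
of all `A^ℓ τ^(j)`, so a subspace as required exists iff `b` is orthogonal to every `A^ℓ τ^(j)`.
By Cayley–Hamilton every power `A^ℓ` is a linear combination of `A^0, …, A^(s-1)`, so the
conditions with `ℓ ≤ s - 1` already imply all the others.
-/

open Matrix Polynomial

namespace Matrix

variable {n R : Type*} [Fintype n] [DecidableEq n] [CommRing R]

theorem dotProduct_pow_mulVec_eq_zero_of_forall_lt_card [Nontrivial R]
    (A : Matrix n n R) (b v : n → R) (h : ∀ i < Fintype.card n, b ⬝ᵥ (A ^ i) *ᵥ v = 0)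
    (ℓ : ℕ) : b ⬝ᵥ (A ^ ℓ) *ᵥ v = 0 := by
  cases isEmpty_or_nonempty n with
  | inl _ => simp [dotProduct]
  | inr _ =>
    have hcharpoly : A.charpoly ≠ 1 := fun h1 => by
      have := A.charpoly_natDegree_eq_dim
      rw [h1, natDegree_one] at this
      exact Fintype.card_ne_zero this.symm
    have hdeg : (X ^ ℓ %ₘ A.charpoly).natDegree < Fintype.card n := by
      simpa using natDegree_modByMonic_lt (X ^ ℓ) A.charpoly_monic hcharpoly
    rw [A.pow_eq_aeval_mod_charpoly, aeval_eq_sum_range' hdeg, sum_mulVec, dotProduct_sum]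
    refine Finset.sum_eq_zero fun i hi => ?_
    rw [smul_mulVec, dotProduct_smul, h i (Finset.mem_range.mp hi), smul_zero]

def krylovSpan (A : Matrix n n R) (S : Set (n → R)) : Submodule R (n → R) :=
  Submodule.span R {x | ∃ ℓ : ℕ, ∃ v ∈ S, (A ^ ℓ) *ᵥ v = x}

theorem subset_krylovSpan (A : Matrix n n R) (S : Set (n → R)) : S ⊆ krylovSpan A S :=
  fun v hv => Submodule.subset_span ⟨0, v, hv, by simp⟩

theorem mulVec_mem_krylovSpan {A : Matrix n n R} {S : Set (n → R)} {x : n → R}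
    (hx : x ∈ krylovSpan A S) : A *ᵥ x ∈ krylovSpan A S := by
  suffices krylovSpan A S ≤ (krylovSpan A S).comap A.mulVecLin from this hx
  refine Submodule.span_le.mpr ?_
  rintro _ ⟨ℓ, v, hv, rfl⟩
  exact Submodule.subset_span ⟨ℓ + 1, v, hv, by rw [pow_succ', ← mulVec_mulVec]; rfl⟩

theorem dotProduct_eq_zero_of_mem_krylovSpan {A : Matrix n n R} {S : Set (n → R)} {b : n → R}
    (h : ∀ ℓ : ℕ, ∀ v ∈ S, b ⬝ᵥ (A ^ ℓ) *ᵥ v = 0) {x : n → R} (hx : x ∈ krylovSpan A S) :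
    b ⬝ᵥ x = 0 := by
  suffices krylovSpan A S ≤ LinearMap.ker (dotProductBilin R R b) from this hx
  refine Submodule.span_le.mpr ?_
  rintro _ ⟨ℓ, v, hv, rfl⟩
  exact h ℓ v hv

theorem pow_mulVec_mem_of_mulVec_mem {A : Matrix n n R} {W : Submodule R (n → R)}
    (hW : ∀ v ∈ W, A *ᵥ v ∈ W) {v : n → R} (hv : v ∈ W) (ℓ : ℕ) : (A ^ ℓ) *ᵥ v ∈ W := by
  induction ℓ with
  | zero => simpa using hv
  | succ ℓ ih => simpa [pow_succ', ← mulVec_mulVec] using hW _ ih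

theorem exists_invariant_orthogonal_superset_iff (A : Matrix n n R) (b : n → R)
    (S : Set (n → R)) :
    (∃ W : Submodule R (n → R), (∀ v ∈ W, A *ᵥ v ∈ W) ∧ (∀ v ∈ W, b ⬝ᵥ v = 0) ∧ S ⊆ W) ↔
      ∀ ℓ : ℕ, ∀ v ∈ S, b ⬝ᵥ (A ^ ℓ) *ᵥ v = 0 := by
  constructor
  · rintro ⟨W, hinv, horth, hS⟩ ℓ v hv
    exact horth _ (pow_mulVec_mem_of_mulVec_mem hinv (hS hv) ℓ)
  · intro h
    exact ⟨krylovSpan A S, fun _ => mulVec_mem_krylovSpan,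
      fun _ => dotProduct_eq_zero_of_mem_krylovSpan h, subset_krylovSpan A S⟩

end Matrix

theorem weak_stage_order_iff_finite_conditions_general
    (s : ℕ) (A : Matrix (Fin s) (Fin s) ℝ) (b : Fin s → ℝ)
    (τ : ℕ → Fin s → ℝ)
    (qt : ℕ) :
    (∃ W : Submodule ℝ (Fin s → ℝ),
        (∀ v ∈ W, A.mulVec v ∈ W) ∧
        (∀ v ∈ W, b ⬝ᵥ v = 0) ∧
        (∀ j : ℕ, 1 ≤ j → j ≤ qt → τ j ∈ W)) ↔
    (∀ ℓ : ℕ, ℓ ≤ s - 1 → ∀ j : ℕ, 1 ≤ j → j ≤ qt →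
        b ⬝ᵥ (A ^ ℓ).mulVec (τ j) = 0) := by
  have hmem : ∀ W : Submodule ℝ (Fin s → ℝ),
      (∀ j : ℕ, 1 ≤ j → j ≤ qt → τ j ∈ W) ↔ τ '' Set.Icc 1 qt ⊆ W := fun W =>
    ⟨fun h => Set.image_subset_iff.mpr fun j hj => h j hj.1 hj.2,
      fun h j hj1 hj2 => h ⟨j, ⟨hj1, hj2⟩, rfl⟩⟩
  simp_rw [hmem, exists_invariant_orthogonal_superset_iff, Set.forall_mem_image, Set.mem_Icc]
  refine ⟨fun h ℓ _ j hj1 hj2 => h ℓ ⟨hj1, hj2⟩, fun h ℓ j hj => ?_⟩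
  refine dotProduct_pow_mulVec_eq_zero_of_forall_lt_card A b (τ j) (fun i hi => ?_) ℓ
  exact h i (Nat.le_sub_one_of_lt (Fintype.card_fin s ▸ hi)) j hj.1 hj.2

/-- Weak stage order `q̃` (existence of an `A`-invariant subspace
orthogonal to `b` containing `τ^(j)` for `1 ≤ j ≤ q̃`) is equivalent to the finite
set of conditions `bᵀ A^ℓ τ^(j) = 0` for `0 ≤ ℓ ≤ s-1`, `1 ≤ j ≤ q̃`. -/
theorem weak_stage_order_iff_finite_conditions
    (s : ℕ) (A : Matrix (Fin s) (Fin s) ℝ) (b : Fin s → ℝ)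
    (c : Fin s → ℝ) (hc : c = A.mulVec (fun _ => 1))
    (τ : ℕ → Fin s → ℝ)
    (hτ : ∀ j : ℕ, 1 ≤ j → τ j = A.mulVec (c ^ (j - 1)) - ((j : ℝ))⁻¹ • c ^ j)
    (qt : ℕ) :
    (∃ W : Submodule ℝ (Fin s → ℝ),
        (∀ v ∈ W, A.mulVec v ∈ W) ∧
        (∀ v ∈ W, b ⬝ᵥ v = 0) ∧
        (∀ j : ℕ, 1 ≤ j → j ≤ qt → τ j ∈ W)) ↔
    (∀ ℓ : ℕ, ℓ ≤ s - 1 → ∀ j : ℕ, 1 ≤ j → j ≤ qt →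
        b ⬝ᵥ (A ^ ℓ).mulVec (τ j) = 0) :=
  weak_stage_order_iff_finite_conditions_general s A b τ qt
end

section
/- Let A ∈ ℝ^{s×s}, b ∈ ℝ^s, c = A e, and τ^(j) = A c^{j−1} − (1/j) c^j. Suppose there exists a subspace W ⊆ ℝ^s that is invariant under A, orthogonal to b, and contains τ^(j) for 1 ≤ j ≤ q̃. Then for every ζ ∈ ℝ such that the matrix I − ζA is invertible, and for every 1 ≤ j ≤ q̃, one has ζ·bᵀ(I − ζA)^{−1} τ^(j) = 0. -/
/-!
A subspace `W` invariant under `A` is invariant under `I - ζA`. When `I - ζA` is invertible, its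
restriction to the finite-dimensional `W` is injective, hence onto `W`, so `(I - ζA)⁻¹` also maps
`W` into itself. Thus `(I - ζA)⁻¹ τ^(j) ∈ W ⟂ b` for `j ≤ q̃`, and `g^(j)(ζ) = 0`.
-/

open Matrix

theorem Submodule.map_eq_self_of_injective_of_map_le {K V : Type*} [DivisionRing K]
    [AddCommGroup V] [Module K V] {f : V →ₗ[K] V} (hf : Function.Injective f)
    {p : Submodule K V} [FiniteDimensional K p] (hp : p.map f ≤ p) : p.map f = p :=
  Submodule.eq_of_le_of_finrank_eq hp (Submodule.equivMapOfInjective f hf p).finrank_eq.symm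

theorem Matrix.inv_mulVec_mem_of_forall_mulVec_mem {n K : Type*} [Fintype n] [DecidableEq n]
    [Field K] {M : Matrix n n K} (hM : IsUnit M) {W : Submodule K (n → K)}
    (hW : ∀ v ∈ W, M *ᵥ v ∈ W) {v : n → K} (hv : v ∈ W) : M⁻¹ *ᵥ v ∈ W := by
  have hmap : W.map M.mulVecLin = W :=
    Submodule.map_eq_self_of_injective_of_map_le (mulVec_injective_iff_isUnit.mpr hM)
      (Submodule.map_le_iff_le_comap.mpr hW)
  obtain ⟨w, hw, rfl⟩ := hmap.ge hv
  rwa [mulVecLin_apply, mulVec_mulVec, nonsing_inv_mul _ ((isUnit_iff_isUnit_det M).mp hM),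
    one_mulVec]

theorem weak_stage_order_implies_g_vanishes_general
    (s : ℕ) (A : Matrix (Fin s) (Fin s) ℝ) (b : Fin s → ℝ)
    (τ : ℕ → Fin s → ℝ)
    (qt : ℕ) (W : Submodule ℝ (Fin s → ℝ))
    (hWA : ∀ v ∈ W, A.mulVec v ∈ W)
    (hWb : ∀ v ∈ W, b ⬝ᵥ v = 0)
    (hWτ : ∀ j : ℕ, 1 ≤ j → j ≤ qt → τ j ∈ W) :
    ∀ ζ : ℝ, IsUnit (1 - ζ • A) → ∀ j : ℕ, 1 ≤ j → j ≤ qt →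
      ζ * (b ⬝ᵥ (1 - ζ • A)⁻¹.mulVec (τ j)) = 0 := by
  intro ζ hζ j hj1 hjq
  have hW : ∀ v ∈ W, (1 - ζ • A) *ᵥ v ∈ W := fun v hv => by
    rw [sub_mulVec, one_mulVec, smul_mulVec]
    exact W.sub_mem hv (W.smul_mem ζ (hWA v hv))
  rw [hWb _ (inv_mulVec_mem_of_forall_mulVec_mem hζ hW (hWτ j hj1 hjq)), mul_zero]

/-- If there is an `A`-invariant subspace `W` orthogonal to `b`
containing the stage order vectors `τ^(j)` for `1 ≤ j ≤ q̃`, then the stiff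
amplification factors `g^(j)(ζ) = ζ bᵀ(I - ζA)⁻¹ τ^(j)` vanish for every `ζ`
with `I - ζA` invertible. -/
theorem weak_stage_order_implies_g_vanishes
    (s : ℕ) (A : Matrix (Fin s) (Fin s) ℝ) (b : Fin s → ℝ)
    (c : Fin s → ℝ) (hc : c = A.mulVec (fun _ => 1))
    (τ : ℕ → Fin s → ℝ)
    (hτ : ∀ j : ℕ, 1 ≤ j → τ j = A.mulVec (c ^ (j - 1)) - ((j : ℝ))⁻¹ • c ^ j)
    (qt : ℕ) (W : Submodule ℝ (Fin s → ℝ))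
    (hWA : ∀ v ∈ W, A.mulVec v ∈ W)
    (hWb : ∀ v ∈ W, b ⬝ᵥ v = 0)
    (hWτ : ∀ j : ℕ, 1 ≤ j → j ≤ qt → τ j ∈ W) :
    ∀ ζ : ℝ, IsUnit (1 - ζ • A) → ∀ j : ℕ, 1 ≤ j → j ≤ qt →
      ζ * (b ⬝ᵥ (1 - ζ • A)⁻¹.mulVec (τ j)) = 0 :=
  weak_stage_order_implies_g_vanishes_general s A b τ qt W hWA hWb hWτ
end

section
/- Let A ∈ ℝ^{s×s}, b ∈ ℝ^s, c = A e, and τ^(j) = A c^{j−1} − (1/j) c^j. Fix q̃ ≥ 1 and suppose there exists ε > 0 such that for all ζ ∈ (0, ε) the matrix I − ζA is invertible and bᵀ(I − ζA)^{−1} τ^(j) = 0 for every 1 ≤ j ≤ q̃. Then bᵀ A^ℓ τ^(j) = 0 for all integers ℓ ≥ 0 and all 1 ≤ j ≤ q̃; consequently the scheme has weak stage order q̃, i.e., the span of {A^ℓ τ^(j) : ℓ ≥ 0, 1 ≤ j ≤ q̃} is an A-invariant subspace orthogonal to b containing each τ^(j). -/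
/-! For `ζ > 0` near `0` put `g ℓ ζ = bᵀ (1 - ζA)⁻¹ Aˡ v`. The resolvent identity
`(1 - ζA)⁻¹ = 1 + ζ (1 - ζA)⁻¹ A` gives `g ℓ ζ = bᵀ Aˡ v + ζ g (ℓ + 1) ζ`, and every `g ℓ` is
continuous at `0`. So if `g ℓ` vanishes to the right of `0`, letting `ζ → 0⁺` yields
`bᵀ Aˡ v = 0`, and then `g (ℓ + 1)` vanishes to the right of `0` as well; induction on `ℓ`
starting from the hypothesis `g 0 = 0` kills every moment `bᵀ Aˡ v`. -/

open Matrix Filter Topology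

theorem eq_zero_of_eventually_add_smul_eq_zero {E : Type*} [TopologicalSpace E] [AddCommGroup E]
    [Module ℝ E] [ContinuousAdd E] [ContinuousSMul ℝ E] [T2Space E] {m : E} {f : ℝ → E}
    (hf : ContinuousAt f 0) (h : ∀ᶠ ζ in 𝓝[>] 0, m + ζ • f ζ = 0) : m = 0 := by
  have hlim : Tendsto (fun ζ : ℝ => m + ζ • f ζ) (𝓝[>] 0) (𝓝 m) := by
    simpa using (tendsto_const_nhds.add (continuousAt_id.smul hf)).mono_left nhdsWithin_le_nhds
  exact tendsto_nhds_unique hlim (tendsto_const_nhds.congr' (EventuallyEq.symm h))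

variable {n : Type*} [Fintype n] [DecidableEq n]

namespace Matrix

theorem eventually_isUnit_one_sub_smul (A : Matrix n n ℝ) :
    ∀ᶠ ζ in 𝓝 (0 : ℝ), IsUnit (1 - ζ • A) := by
  have hdet : ContinuousAt (fun ζ : ℝ => (1 - ζ • A).det) 0 := by fun_prop
  filter_upwards [hdet.eventually_ne (by simp : (1 - (0 : ℝ) • A).det ≠ 0)] with ζ hζ
  exact (isUnit_iff_isUnit_det _).2 hζ.isUnit

theorem continuousAt_inv_one_sub_smul (A : Matrix n n ℝ) :
    ContinuousAt (fun ζ : ℝ => (1 - ζ • A)⁻¹) 0 := by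
  refine ContinuousAt.comp (g := Inv.inv) ?_ (by fun_prop)
  refine continuousAt_matrix_inv _ ?_
  rw [zero_smul, sub_zero, det_one, Ring.inverse_eq_inv']
  exact continuousAt_inv₀ one_ne_zero

theorem inv_one_sub_smul_mul_pow {K : Type*} [CommRing K] {A : Matrix n n K} {ζ : K}
    (hA : IsUnit (1 - ζ • A)) (ℓ : ℕ) :
    (1 - ζ • A)⁻¹ * A ^ ℓ = A ^ ℓ + ζ • ((1 - ζ • A)⁻¹ * A ^ (ℓ + 1)) := calc
  (1 - ζ • A)⁻¹ * A ^ ℓ = (1 - ζ • A)⁻¹ * ((1 - ζ • A) * A ^ ℓ + ζ • A ^ (ℓ + 1)) := by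
    rw [sub_mul, one_mul, smul_mul_assoc, ← pow_succ', sub_add_cancel]
  _ = A ^ ℓ + ζ • ((1 - ζ • A)⁻¹ * A ^ (ℓ + 1)) := by
    rw [mul_add, ← mul_assoc, nonsing_inv_mul _ ((isUnit_iff_isUnit_det _).1 hA), one_mul,
      mul_smul_comm]

theorem dotProduct_pow_mulVec_eq_zero_of_resolvent {A : Matrix n n ℝ} {b v : n → ℝ}
    (h : ∀ᶠ ζ : ℝ in 𝓝[>] 0, b ⬝ᵥ (1 - ζ • A)⁻¹ *ᵥ v = 0) (ℓ : ℕ) :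
    b ⬝ᵥ (A ^ ℓ) *ᵥ v = 0 := by
  set g : ℕ → ℝ → ℝ := fun ℓ ζ => b ⬝ᵥ ((1 - ζ • A)⁻¹ * A ^ ℓ) *ᵥ v
  have hrec : ∀ᶠ ζ in 𝓝[>] 0, ∀ ℓ, g ℓ ζ = b ⬝ᵥ (A ^ ℓ) *ᵥ v + ζ • g (ℓ + 1) ζ := by
    filter_upwards [nhdsWithin_le_nhds (eventually_isUnit_one_sub_smul A)] with ζ hζ ℓ
    simp only [g, inv_one_sub_smul_mul_pow hζ ℓ, add_mulVec, smul_mulVec, dotProduct_add,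
      dotProduct_smul]
  have hcont : ∀ ℓ, ContinuousAt (g ℓ) 0 := fun ℓ =>
    (continuous_const.dotProduct ((continuous_id.matrix_mul continuous_const).matrix_mulVec
      continuous_const)).continuousAt.comp (continuousAt_inv_one_sub_smul A)
  have hmoment : ∀ ℓ, (∀ᶠ ζ in 𝓝[>] 0, g ℓ ζ = 0) → b ⬝ᵥ (A ^ ℓ) *ᵥ v = 0 := fun ℓ hℓ =>
    eq_zero_of_eventually_add_smul_eq_zero (hcont (ℓ + 1)) <| by
      filter_upwards [hrec, hℓ] with ζ hr hz
      rw [← hr, hz]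
  have hvanish : ∀ ℓ, ∀ᶠ ζ in 𝓝[>] 0, g ℓ ζ = 0 := by
    intro ℓ
    induction ℓ with
    | zero => simpa [g] using h
    | succ ℓ ih =>
      filter_upwards [hrec, ih, self_mem_nhdsWithin] with ζ hr hz (hζ : 0 < ζ)
      rw [hr, hmoment ℓ ih, zero_add] at hz
      exact (smul_eq_zero.1 hz).resolve_left hζ.ne'
  exact hmoment ℓ (hvanish ℓ)

end Matrix

theorem g_vanishes_implies_weak_stage_order_general
    (s : ℕ) (A : Matrix (Fin s) (Fin s) ℝ) (b : Fin s → ℝ)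
    (τ : ℕ → Fin s → ℝ)
    (qt : ℕ)
    (ε : ℝ) (hε : 0 < ε)
    (h : ∀ ζ : ℝ, 0 < ζ → ζ < ε → IsUnit (1 - ζ • A) ∧
        ∀ j : ℕ, 1 ≤ j → j ≤ qt → b ⬝ᵥ (1 - ζ • A)⁻¹.mulVec (τ j) = 0) :
    (∀ ℓ : ℕ, ∀ j : ℕ, 1 ≤ j → j ≤ qt → b ⬝ᵥ (A ^ ℓ).mulVec (τ j) = 0) ∧
    (∀ v ∈ Submodule.span ℝ
        {v | ∃ ℓ : ℕ, ∃ j : ℕ, 1 ≤ j ∧ j ≤ qt ∧ v = (A ^ ℓ).mulVec (τ j)},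
      A.mulVec v ∈ Submodule.span ℝ
        {v | ∃ ℓ : ℕ, ∃ j : ℕ, 1 ≤ j ∧ j ≤ qt ∧ v = (A ^ ℓ).mulVec (τ j)}) ∧
    (∀ v ∈ Submodule.span ℝ
        {v | ∃ ℓ : ℕ, ∃ j : ℕ, 1 ≤ j ∧ j ≤ qt ∧ v = (A ^ ℓ).mulVec (τ j)},
      b ⬝ᵥ v = 0) ∧
    (∀ j : ℕ, 1 ≤ j → j ≤ qt → τ j ∈ Submodule.span ℝ
        {v | ∃ ℓ : ℕ, ∃ j : ℕ, 1 ≤ j ∧ j ≤ qt ∧ v = (A ^ ℓ).mulVec (τ j)}) := by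
  set S := {v | ∃ ℓ : ℕ, ∃ j : ℕ, 1 ≤ j ∧ j ≤ qt ∧ v = (A ^ ℓ).mulVec (τ j)}
  have moments : ∀ ℓ j, 1 ≤ j → j ≤ qt → b ⬝ᵥ (A ^ ℓ).mulVec (τ j) = 0 := fun ℓ j hj hjq =>
    dotProduct_pow_mulVec_eq_zero_of_resolvent (by
      filter_upwards [Ioo_mem_nhdsGT hε] with ζ hζ using (h ζ hζ.1 hζ.2).2 j hj hjq) ℓ
  have hinvariant : A.mulVecLin '' S ⊆ S := by
    rintro _ ⟨_, ⟨ℓ, j, hj, hjq, rfl⟩, rfl⟩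
    exact ⟨ℓ + 1, j, hj, hjq, by rw [mulVecLin_apply, mulVec_mulVec, pow_succ']⟩
  have horthogonal : S ⊆ LinearMap.ker (dotProductBilin ℝ ℝ b) := by
    rintro _ ⟨ℓ, j, hj, hjq, rfl⟩
    exact moments ℓ j hj hjq
  refine ⟨moments, fun v hv => ?_, fun v hv => Submodule.span_le.2 horthogonal hv,
    fun j hj hjq => Submodule.subset_span ⟨0, j, hj, hjq, by rw [pow_zero, one_mulVec]⟩⟩
  have hAv : A.mulVecLin v ∈ (Submodule.span ℝ S).map A.mulVecLin := Submodule.mem_map_of_mem hv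
  rw [Submodule.map_span] at hAv
  exact Submodule.span_mono hinvariant hAv

/-- If `bᵀ(I - ζA)⁻¹ τ^(j) = 0` for all `ζ` in some interval `(0, ε)`
(on which `I - ζA` is invertible) and all `1 ≤ j ≤ q̃`, then `bᵀ A^ℓ τ^(j) = 0` for
all `ℓ ≥ 0` and `1 ≤ j ≤ q̃`; consequently the span of `{A^ℓ τ^(j)}` is an
`A`-invariant subspace orthogonal to `b` containing each `τ^(j)`, i.e. the scheme
has weak stage order `q̃`. -/
theorem g_vanishes_implies_weak_stage_order
    (s : ℕ) (A : Matrix (Fin s) (Fin s) ℝ) (b : Fin s → ℝ)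
    (c : Fin s → ℝ) (hc : c = A.mulVec (fun _ => 1))
    (τ : ℕ → Fin s → ℝ)
    (hτ : ∀ j : ℕ, 1 ≤ j → τ j = A.mulVec (c ^ (j - 1)) - ((j : ℝ))⁻¹ • c ^ j)
    (qt : ℕ) (hqt : 1 ≤ qt)
    (ε : ℝ) (hε : 0 < ε)
    (h : ∀ ζ : ℝ, 0 < ζ → ζ < ε → IsUnit (1 - ζ • A) ∧
        ∀ j : ℕ, 1 ≤ j → j ≤ qt → b ⬝ᵥ (1 - ζ • A)⁻¹.mulVec (τ j) = 0) :
    (∀ ℓ : ℕ, ∀ j : ℕ, 1 ≤ j → j ≤ qt → b ⬝ᵥ (A ^ ℓ).mulVec (τ j) = 0) ∧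
    (∀ v ∈ Submodule.span ℝ
        {v | ∃ ℓ : ℕ, ∃ j : ℕ, 1 ≤ j ∧ j ≤ qt ∧ v = (A ^ ℓ).mulVec (τ j)},
      A.mulVec v ∈ Submodule.span ℝ
        {v | ∃ ℓ : ℕ, ∃ j : ℕ, 1 ≤ j ∧ j ≤ qt ∧ v = (A ^ ℓ).mulVec (τ j)}) ∧
    (∀ v ∈ Submodule.span ℝ
        {v | ∃ ℓ : ℕ, ∃ j : ℕ, 1 ≤ j ∧ j ≤ qt ∧ v = (A ^ ℓ).mulVec (τ j)},
      b ⬝ᵥ v = 0) ∧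
    (∀ j : ℕ, 1 ≤ j → j ≤ qt → τ j ∈ Submodule.span ℝ
        {v | ∃ ℓ : ℕ, ∃ j : ℕ, 1 ≤ j ∧ j ≤ qt ∧ v = (A ^ ℓ).mulVec (τ j)}) :=
  g_vanishes_implies_weak_stage_order_general s A b τ qt ε hε h
end

section
/- Let A ∈ ℝ^{s×s} be lower triangular with a₁₁ ≠ 0, c = A e, and τ^(j) = A c^{j−1} − (1/j) c^j. If for some j ≥ 2 and μ ∈ ℝ one has A τ^(j) = μ τ^(j), then μ = a₁₁. -/
open Matrix

/-!
The first row of a lower triangular matrix `A` is `(a₁₁, 0, …, 0)`, so the first component of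
`A v` is `a₁₁ v₁`. Hence `c₁ = a₁₁` and `τ^(j)₁ = a₁₁ʲ (1 - 1/j)`, which is nonzero for `j ≥ 2`.
Comparing first components of `A τ^(j) = μ τ^(j)` then gives `a₁₁ τ^(j)₁ = μ τ^(j)₁`, so `μ = a₁₁`.
-/

namespace Matrix

section LowerTriangular

variable {R : Type*} [CommSemiring R] {n : ℕ} {A : Matrix (Fin (n + 1)) (Fin (n + 1)) R}

theorem mulVec_apply_zero_of_lowerTriangular (hA : ∀ i j : Fin (n + 1), i < j → A i j = 0)
    (v : Fin (n + 1) → R) : (A *ᵥ v) 0 = A 0 0 * v 0 := by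
  simp [mulVec, dotProduct, Fin.sum_univ_succ, hA 0 _ (Fin.succ_pos _)]

theorem eigenvalue_eq_apply_zero_zero_of_lowerTriangular [IsCancelMulZero R]
    (hA : ∀ i j : Fin (n + 1), i < j → A i j = 0) {v : Fin (n + 1) → R} {μ : R}
    (hv : A *ᵥ v = μ • v) (hv0 : v 0 ≠ 0) : μ = A 0 0 := by
  have h0 := congrFun hv 0
  rw [mulVec_apply_zero_of_lowerTriangular hA, Pi.smul_apply, smul_eq_mul] at h0
  exact mul_right_cancel₀ hv0 h0.symm

end LowerTriangular

end Matrix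

section StageOrder

variable {K : Type*} [Field K]

def stageOrderVector {ι : Type*} [Fintype ι] (A : Matrix ι ι K) (j : ℕ) : ι → K :=
  A *ᵥ (A *ᵥ fun _ => 1) ^ (j - 1) - (j : K)⁻¹ • (A *ᵥ fun _ => 1) ^ j

variable {n : ℕ} {A : Matrix (Fin (n + 1)) (Fin (n + 1)) K}

theorem stageOrderVector_apply_zero_of_lowerTriangular
    (hA : ∀ i j : Fin (n + 1), i < j → A i j = 0) {j : ℕ} (hj : 1 ≤ j) :
    stageOrderVector A j 0 = A 0 0 ^ j * (1 - (j : K)⁻¹) := by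
  obtain ⟨k, rfl⟩ := Nat.exists_eq_add_of_le' hj
  simp only [stageOrderVector, Pi.sub_apply, Pi.smul_apply, Pi.pow_apply, smul_eq_mul,
    mulVec_apply_zero_of_lowerTriangular hA, Nat.add_sub_cancel]
  ring

theorem stageOrderVector_apply_zero_ne_zero_of_lowerTriangular [CharZero K]
    (hA : ∀ i j : Fin (n + 1), i < j → A i j = 0) (ha : A 0 0 ≠ 0) {j : ℕ} (hj : 2 ≤ j) :
    stageOrderVector A j 0 ≠ 0 := by
  rw [stageOrderVector_apply_zero_of_lowerTriangular hA (by omega)]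
  refine mul_ne_zero (pow_ne_zero _ ha) (sub_ne_zero.mpr ?_)
  rw [ne_comm, inv_ne_one, Nat.cast_ne_one]
  omega

end StageOrder

/-- For a lower triangular `A` with `a₁₁ ≠ 0` and `c = A e`, if the
stage order vector `τ^(j)` (for some `j ≥ 2`) is an eigenvector of `A` with
eigenvalue `μ`, then `μ = a₁₁`. -/
theorem eigenvalue_must_be_a11
    (n : ℕ) (A : Matrix (Fin (n + 1)) (Fin (n + 1)) ℝ)
    (hA : ∀ i j : Fin (n + 1), i < j → A i j = 0)
    (ha : A 0 0 ≠ 0)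
    (c : Fin (n + 1) → ℝ) (hc : c = A.mulVec (fun _ => 1))
    (τ : ℕ → Fin (n + 1) → ℝ)
    (hτ : ∀ j : ℕ, 1 ≤ j → τ j = A.mulVec (c ^ (j - 1)) - ((j : ℝ))⁻¹ • c ^ j)
    (j : ℕ) (hj : 2 ≤ j) (μ : ℝ)
    (hev : A.mulVec (τ j) = μ • τ j) :
    μ = A 0 0 := by
  subst hc
  have hτj : τ j = stageOrderVector A j := hτ j (by omega)
  rw [hτj] at hev
  exact eigenvalue_eq_apply_zero_zero_of_lowerTriangular hA hev
    (stageOrderVector_apply_zero_ne_zero_of_lowerTriangular hA ha hj)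
end

section
/- For j ≥ 2 define F_j(a₁₁, a₂₁, a₂₂) := (1 − 1/j)·a₁₁^j·a₂₁ + (a₂₂ − a₁₁)·(a₁₁^{j−1} a₂₁ + (a₂₁ + a₂₂)^{j−1} a₂₂ − (1/j)(a₂₁ + a₂₂)^j). The points P₁ = (3√2 − 4, 1, √2 − 1) and P₂ = (−(√2+1)(√2+2), 1, −(√2+1)) satisfy F₂ = 0 and F₃ = 0; moreover neither P₁ nor P₂ lies on the equal-time line a₁₁ = a₂₁ + a₂₂. -/
/-! Both points lie on the line `s ↦ (3s - 4, 1, s - 1)`: `P₁` at `s = √2` and `P₂`, its Galois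
conjugate, at `s = -√2`. Along this line `F₂` and `F₃` are polynomials in `s` divisible by
`s² - 2`, so they vanish at both points, while the equal-time condition `3s - 4 = s` would
force `s = 2`. -/

/-- The polynomial `F_j(a₁₁, a₂₁, a₂₂)` arising as the second component of
`A τ^(j) - a₁₁ τ^(j)` for a 2×2 lower triangular RK matrix. -/
noncomputable def F (j : ℕ) (a11 a21 a22 : ℝ) : ℝ :=
  (1 - ((j : ℝ))⁻¹) * a11 ^ j * a21 +
    (a22 - a11) * (a11 ^ (j - 1) * a21 + (a21 + a22) ^ (j - 1) * a22
      - ((j : ℝ))⁻¹ * (a21 + a22) ^ j)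

lemma F_two_on_line (s : ℝ) : F 2 (3 * s - 4) 1 (s - 1) = (2 - s) * (s ^ 2 - 2) := by
  simp only [F]
  norm_num
  ring

lemma F_three_on_line (s : ℝ) :
    F 3 (3 * s - 4) 1 (s - 1) = -(4 / 3) * (s - 1) * (s - 2) * (s ^ 2 - 2) := by
  simp only [F]
  norm_num
  ring

section

variable {s : ℝ}

lemma F_two_on_line_eq_zero (hs : s ^ 2 = 2) : F 2 (3 * s - 4) 1 (s - 1) = 0 := by
  rw [F_two_on_line, hs, sub_self, mul_zero]

lemma F_three_on_line_eq_zero (hs : s ^ 2 = 2) : F 3 (3 * s - 4) 1 (s - 1) = 0 := by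
  rw [F_three_on_line, hs, sub_self, mul_zero]

lemma on_line_ne_equal_time (hs : s ^ 2 = 2) : 3 * s - 4 ≠ 1 + (s - 1) := by
  intro h
  have hs2 : s = 2 := by linarith
  norm_num [hs2] at hs

end

/-- The points `P₁ = (3√2 - 4, 1, √2 - 1)` and
`P₂ = (-(√2+1)(√2+2), 1, -(√2+1))` satisfy `F₂ = 0` and `F₃ = 0`, and neither
lies on the equal-time line `a₁₁ = a₂₁ + a₂₂`. -/
theorem P1_P2_satisfy_F2_F3_not_equal_time :
    F 2 (3 * Real.sqrt 2 - 4) 1 (Real.sqrt 2 - 1) = 0 ∧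
    F 3 (3 * Real.sqrt 2 - 4) 1 (Real.sqrt 2 - 1) = 0 ∧
    F 2 (-((Real.sqrt 2 + 1) * (Real.sqrt 2 + 2))) 1 (-(Real.sqrt 2 + 1)) = 0 ∧
    F 3 (-((Real.sqrt 2 + 1) * (Real.sqrt 2 + 2))) 1 (-(Real.sqrt 2 + 1)) = 0 ∧
    3 * Real.sqrt 2 - 4 ≠ 1 + (Real.sqrt 2 - 1) ∧
    -((Real.sqrt 2 + 1) * (Real.sqrt 2 + 2)) ≠ 1 + (-(Real.sqrt 2 + 1)) := by
  have h_sqrt : Real.sqrt 2 ^ 2 = 2 := Real.sq_sqrt zero_le_two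
  have h_neg_sqrt : (-Real.sqrt 2) ^ 2 = 2 := by rw [neg_sq, h_sqrt]
  have ha₁₁ : -((Real.sqrt 2 + 1) * (Real.sqrt 2 + 2)) = 3 * -Real.sqrt 2 - 4 := by
    linear_combination -h_sqrt
  have ha₂₂ : -(Real.sqrt 2 + 1) = -Real.sqrt 2 - 1 := by ring
  rw [ha₁₁, ha₂₂]
  exact ⟨F_two_on_line_eq_zero h_sqrt, F_three_on_line_eq_zero h_sqrt, F_two_on_line_eq_zero h_neg_sqrt,
    F_three_on_line_eq_zero h_neg_sqrt, on_line_ne_equal_time h_sqrt, on_line_ne_equal_time h_neg_sqrt⟩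
end

section
/- Let A ∈ ℝ^{s×s} be lower triangular with all diagonal entries nonzero (so A is invertible), let b ∈ ℝ^s satisfy bᵀe = 1, let c = A e, and let τ^(j) = A c^{j−1} − (1/j) c^j. Then the scheme cannot satisfy the weak stage order eigenvector criterion of order 4: it is impossible that for every j ∈ {1, 2, 3, 4} there exists μⱼ ∈ ℝ with A τ^(j) = μⱼ τ^(j) and bᵀ τ^(j) = 0. In other words, DIRK schemes with invertible A have q̃ₑ ≤ 3. -/
/-!
In the first row the stage vector has entry `a₁₁ʲ (1 - 1/j) ≠ 0` for `j ≥ 2`, so every eigenvalue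
`μⱼ` equals `L := a₁₁`. Going down the rows, once `cₖ = L` for all earlier `k`, the eigen-equations
of row `i` for `j = 2, 3, 4` are polynomial identities in `L`, `aᵢᵢ`, `cᵢ`, and a combination of them
gives `L² cᵢ² (L - cᵢ) = 0`, forcing `cᵢ = L`. Then `c = L e`, so `τ⁽²⁾ = (L²/2) e` and
`bᵀτ⁽²⁾ = L²/2 ≠ 0`.
-/

open Matrix Finset

-- Row `i` of `A τ⁽ʲ⁾ = L τ⁽ʲ⁾` when all earlier abscissae equal `L`, with `d = aᵢᵢ`, `x = cᵢ`.
theorem eq_of_stage_row_equations {L d x : ℝ} (hL : L ≠ 0) (hd : d ≠ 0)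
    (h : ∀ j ∈ ({2, 3, 4} : Finset ℕ),
      (L ^ j - (j : ℝ)⁻¹ * L ^ j) * (x - d) + d * (L ^ (j - 1) * (x - d) + d * x ^ (j - 1)
        - (j : ℝ)⁻¹ * x ^ j) = L * (L ^ (j - 1) * (x - d) + d * x ^ (j - 1) - (j : ℝ)⁻¹ * x ^ j)) :
    x = L := by
  have h2 := h 2 (by simp)
  have h3 := h 3 (by simp)
  have h4 := h 4 (by simp)
  norm_num at h2 h3 h4
  have hx : x ≠ 0 := by
    rintro rfl
    have : d * L ^ 3 = 0 := by linear_combination (6 * L) * h2 - 6 * h3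
    simp_all
  have key : L ^ 2 * x ^ 2 * (L - x) = 0 := by
    linear_combination (-2 * (L ^ 2 + 4 * L * x + x ^ 2)) * h2 + (6 * (L + x)) * h3 - 4 * h4
  simp only [mul_eq_zero, pow_eq_zero_iff two_ne_zero, hL, hx, sub_eq_zero, false_or] at key
  exact key.symm

section LowerTriangular

variable {n : Type*} [Fintype n] [LinearOrder n] [LocallyFiniteOrderBot n]
  {A : Matrix n n ℝ}

variable (A) in
noncomputable def stageVector (j : ℕ) : n → ℝ :=
  A *ᵥ (A *ᵥ 1) ^ (j - 1) - (j : ℝ)⁻¹ • (A *ᵥ 1) ^ j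

theorem mulVec_apply_eq_sum_Iio_add (hA : ∀ i j, i < j → A i j = 0) (v : n → ℝ) (i : n) :
    (A *ᵥ v) i = ∑ k ∈ Iio i, A i k * v k + A i i * v i := by
  have hIic : (A *ᵥ v) i = ∑ k ∈ Iic i, A i k * v k :=
    (sum_subset (subset_univ _) fun k _ hk =>
      mul_eq_zero_of_left (hA i k (not_le.mp (mem_Iic.not.mp hk))) _).symm
  rw [hIic, ← Iio_insert, sum_insert notMem_Iio_self, add_comm]

theorem mulVec_apply_of_eq_on_Iio (hA : ∀ i j, i < j → A i j = 0) {v : n → ℝ} {i : n} {a : ℝ}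
    (hv : ∀ k < i, v k = a) :
    (A *ᵥ v) i = a * ((A *ᵥ 1) i - A i i) + A i i * v i := by
  rw [mulVec_apply_eq_sum_Iio_add hA, mulVec_apply_eq_sum_Iio_add hA,
    sum_congr rfl fun k hk => by rw [hv k (mem_Iio.mp hk)], ← sum_mul]
  simp only [Pi.one_apply, mul_one, add_sub_cancel_right, mul_comm]

theorem stageVector_apply_of_eq_on_Iio (hA : ∀ i j, i < j → A i j = 0) {i : n} {L : ℝ}
    (hc : ∀ k < i, (A *ᵥ 1) k = L) (j : ℕ) :
    stageVector A j i = L ^ (j - 1) * ((A *ᵥ 1) i - A i i) + A i i * (A *ᵥ 1) i ^ (j - 1)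
      - (j : ℝ)⁻¹ * (A *ᵥ 1) i ^ j := by
  rw [stageVector, Pi.sub_apply, mulVec_apply_of_eq_on_Iio hA (a := L ^ (j - 1))
    fun k hk => by rw [Pi.pow_apply, hc k hk]]
  rfl

theorem stageVector_apply_of_eq_on_Iic (hA : ∀ i j, i < j → A i j = 0) {i : n} {L : ℝ}
    (hc : ∀ k ≤ i, (A *ᵥ 1) k = L) {j : ℕ} (hj : 1 ≤ j) :
    stageVector A j i = L ^ j - (j : ℝ)⁻¹ * L ^ j := by
  rw [stageVector_apply_of_eq_on_Iio hA fun k hk => hc k hk.le, hc i le_rfl]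
  have hpow : L ^ j = L ^ (j - 1) * L := by rw [← pow_succ, Nat.sub_add_cancel hj]
  linear_combination -hpow

theorem stageVector_eigen_row_eq (hA : ∀ i j, i < j → A i j = 0) {i : n} {L μ : ℝ}
    (hc : ∀ k < i, (A *ᵥ 1) k = L) {j : ℕ} (hj : 1 ≤ j)
    (h : A *ᵥ stageVector A j = μ • stageVector A j) :
    (L ^ j - (j : ℝ)⁻¹ * L ^ j) * ((A *ᵥ 1) i - A i i) + A i i * stageVector A j i
      = μ * stageVector A j i := by
  rw [← mulVec_apply_of_eq_on_Iio hA fun k hk => stageVector_apply_of_eq_on_Iic hA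
    (fun l hl => hc l (hl.trans_lt hk)) hj, h]
  rfl

theorem eigenvalue_eq_of_isBot (hA : ∀ i j, i < j → A i j = 0) {i : n} (hi : IsBot i)
    (hdiag : A i i ≠ 0) {j : ℕ} (hj : 2 ≤ j) {μ : ℝ}
    (h : A *ᵥ stageVector A j = μ • stageVector A j) : μ = A i i := by
  have hc : ∀ k ≤ i, (A *ᵥ 1) k = A i i := fun k hk => by
    rw [le_antisymm hk (hi k), mulVec_apply_eq_sum_Iio_add hA, Iio_eq_empty.mpr hi.isMin]
    simp
  have heig := stageVector_eigen_row_eq hA (fun k hk => hc k hk.le) (by omega) h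
  rw [hc i le_rfl, sub_self, mul_zero, zero_add] at heig
  have hne : stageVector A j i ≠ 0 := by
    rw [stageVector_apply_of_eq_on_Iic hA hc (by omega)]
    have hinv : (j : ℝ)⁻¹ < 1 := inv_lt_one_of_one_lt₀ (by exact_mod_cast hj)
    rw [← one_sub_mul]
    exact mul_ne_zero (sub_ne_zero.mpr hinv.ne') (pow_ne_zero _ hdiag)
  exact (mul_right_cancel₀ hne heig).symm

theorem abscissae_eq_of_stageVector_eigen (hA : ∀ i j, i < j → A i j = 0)
    (hdiag : ∀ i, A i i ≠ 0) {L : ℝ} (hL : L ≠ 0)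
    (h : ∀ j ∈ ({2, 3, 4} : Finset ℕ), A *ᵥ stageVector A j = L • stageVector A j) (i : n) :
    (A *ᵥ 1) i = L := by
  induction i using WellFoundedLT.induction with
  | _ i ih =>
    refine eq_of_stage_row_equations hL (hdiag i) fun j hj => ?_
    have hj1 : 1 ≤ j := by simp only [mem_insert, mem_singleton] at hj; omega
    rw [← stageVector_apply_of_eq_on_Iio hA ih]
    exact stageVector_eigen_row_eq hA ih hj1 (h j hj)

theorem stageVector_eq_smul_one (hA : ∀ i j, i < j → A i j = 0) {L : ℝ}
    (hc : ∀ k, (A *ᵥ 1) k = L) {j : ℕ} (hj : 1 ≤ j) :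
    stageVector A j = (L ^ j - (j : ℝ)⁻¹ * L ^ j) • 1 := by
  ext i
  simp [stageVector_apply_of_eq_on_Iic hA (fun k _ => hc k) hj]

end LowerTriangular

/-- A DIRK scheme (lower triangular `A`) with all diagonal entries
nonzero and consistent weights (`bᵀe = 1`) cannot satisfy the weak stage order
eigenvector criterion of order 4: it is impossible that for each `1 ≤ j ≤ 4`
there is `μⱼ` with `A τ^(j) = μⱼ τ^(j)` and `bᵀ τ^(j) = 0`. Thus `q̃ₑ ≤ 3`. -/
theorem dirk_eigenvector_criterion_at_most_three
    (s : ℕ) (A : Matrix (Fin s) (Fin s) ℝ)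
    (hA : ∀ i j : Fin s, i < j → A i j = 0)
    (hdiag : ∀ i : Fin s, A i i ≠ 0)
    (b : Fin s → ℝ) (hb : b ⬝ᵥ (fun _ => 1) = 1)
    (c : Fin s → ℝ) (hc : c = A.mulVec (fun _ => 1))
    (τ : ℕ → Fin s → ℝ)
    (hτ : ∀ j : ℕ, 1 ≤ j → τ j = A.mulVec (c ^ (j - 1)) - ((j : ℝ))⁻¹ • c ^ j) :
    ¬ (∀ j : ℕ, 1 ≤ j → j ≤ 4 →
        ∃ μ : ℝ, A.mulVec (τ j) = μ • τ j ∧ b ⬝ᵥ τ j = 0) := by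
  intro H
  have hstage : ∀ j ∈ ({2, 3, 4} : Finset ℕ),
      ∃ μ : ℝ, A *ᵥ stageVector A j = μ • stageVector A j ∧ b ⬝ᵥ stageVector A j = 0 := by
    intro j hj
    simp only [mem_insert, mem_singleton] at hj
    rw [show stageVector A j = τ j by rw [hτ j (by omega), hc]; rfl]
    exact H j (by omega) (by omega)
  have : Nonempty (Fin s) := by
    by_contra hempty
    simp [not_nonempty_iff.mp hempty] at hb
  obtain ⟨i₀, hi₀⟩ : ∃ i₀ : Fin s, IsBot i₀ := Finite.exists_min id
  have hL : ∀ j ∈ ({2, 3, 4} : Finset ℕ),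
      A *ᵥ stageVector A j = A i₀ i₀ • stageVector A j := by
    intro j hj
    obtain ⟨μ, hμ, -⟩ := hstage j hj
    simp only [mem_insert, mem_singleton] at hj
    rwa [← eigenvalue_eq_of_isBot hA hi₀ (hdiag i₀) (by omega) hμ]
  obtain ⟨-, -, hb2⟩ := hstage 2 (by simp)
  rw [stageVector_eq_smul_one hA (abscissae_eq_of_stageVector_eigen hA hdiag (hdiag i₀) hL)
    one_le_two, dotProduct_smul, show b ⬝ᵥ 1 = 1 from hb, smul_eq_mul, mul_one] at hb2
  have hsq : A i₀ i₀ ^ 2 = 0 := by linarith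
  exact hdiag i₀ (pow_eq_zero_iff two_ne_zero |>.mp hsq)
end
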